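/- For every complex number ρ, the characteristic polynomial of ZeroSNet with the optimal coefficients factors as ρ³ − (1/3)ρ² − (5/9)ρ − (1/9) = (ρ − 1)·(ρ + 1/3)². Consequently its complex roots are exactly 1 (a simple root) and −1/3 (a double root), so the moduli of its roots are 1, 1/3, and 1/3. -/

import Mathlib

open Polynomial

noncomputable def zerosOptCharPoly : Polynomial ℂ :=
  X ^ 3 - C (1 / 3) * X ^ 2 - C (5 / 9) * X - C (1 / 9)

theorem Polynomial.rootMultiplicity_X_sub_C_pow_mul_X_sub_C_pow {R : Type*} [CommRing R]
    [IsDomain R] {a b : R} (hab : a ≠ b) (m n : ℕ) :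
    ((X - C a) ^ m * (X - C b) ^ n).rootMultiplicity a = m := by
  have hne : (X - C a) ^ m * (X - C b) ^ n ≠ 0 :=
    mul_ne_zero (pow_ne_zero _ (X_sub_C_ne_zero a)) (pow_ne_zero _ (X_sub_C_ne_zero b))
  have hb : ¬ ((X - C b) ^ n).IsRoot a := by
    simpa [IsRoot, sub_eq_zero] using fun h => absurd h hab
  rw [rootMultiplicity_mul hne, rootMultiplicity_X_sub_C_pow, rootMultiplicity_eq_zero hb,
    add_zero]

section Cubic

variable {K : Type*} [Field K] [CharZero K]

theorem zerosnet_cubic_eq_mul_sq (ρ : K) :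
    ρ ^ 3 - (1 / 3) * ρ ^ 2 - (5 / 9) * ρ - 1 / 9 = (ρ - 1) * (ρ + 1 / 3) ^ 2 := by
  ring

theorem zerosnet_cubic_eq_zero_iff (z : K) :
    z ^ 3 - (1 / 3) * z ^ 2 - (5 / 9) * z - 1 / 9 = 0 ↔ z = 1 ∨ z = -1 / 3 := by
  rw [zerosnet_cubic_eq_mul_sq, mul_eq_zero, sub_eq_zero, pow_eq_zero_iff two_ne_zero,
    add_eq_zero_iff_eq_neg, neg_div]

end Cubic

theorem zerosOptCharPoly_eq : zerosOptCharPoly = (X - C 1) * (X - C (-1 / 3)) ^ 2 := by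
  refine Polynomial.funext fun z => ?_
  simpa [zerosOptCharPoly, neg_div, sub_neg_eq_add] using zerosnet_cubic_eq_mul_sq z

/-- The ZeroSNet characteristic polynomial with optimal coefficients factors as
`ρ³ − (1/3)ρ² − (5/9)ρ − 1/9 = (ρ − 1)(ρ + 1/3)²`; its complex roots are exactly `1`
(a simple root) and `−1/3` (a double root), whose moduli are `1` and `1/3`. -/
theorem zerosnet_optimal_charpoly_roots :
    (∀ ρ : ℂ, ρ ^ 3 - (1 / 3) * ρ ^ 2 - (5 / 9) * ρ - 1 / 9
      = (ρ - 1) * (ρ + 1 / 3) ^ 2) ∧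
    (∀ z : ℂ, z ^ 3 - (1 / 3) * z ^ 2 - (5 / 9) * z - 1 / 9 = 0 ↔ z = 1 ∨ z = -1 / 3) ∧
    zerosOptCharPoly.rootMultiplicity 1 = 1 ∧
    zerosOptCharPoly.rootMultiplicity (-1 / 3) = 2 ∧
    ‖(1 : ℂ)‖ = 1 ∧ ‖(-1 / 3 : ℂ)‖ = 1 / 3 := by
  have hroots : (1 : ℂ) ≠ -1 / 3 := by norm_num
  refine ⟨zerosnet_cubic_eq_mul_sq, zerosnet_cubic_eq_zero_iff, ?_, ?_, norm_one, ?_⟩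
  · rw [zerosOptCharPoly_eq, ← pow_one (X - C 1),
      rootMultiplicity_X_sub_C_pow_mul_X_sub_C_pow hroots]
  · rw [zerosOptCharPoly_eq, mul_comm, ← pow_one (X - C 1),
      rootMultiplicity_X_sub_C_pow_mul_X_sub_C_pow hroots.symm]
  · rw [neg_div, norm_neg, norm_div, norm_one, Complex.norm_ofNat]
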